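/- arXiv:2312.10710 — 4 statements merged into one kernel-verified Lean document; each statement's English description precedes it below -/
import Mathlib

section
/- For real parameters θ¹, θ² with θ¹+θ² > 0 and θ¹−θ² > 0, the integral ∫_{ℝ} sech(x)^{θ¹} · e^{θ² x} dx converges and equals 2^{θ¹−1} · Γ((θ¹−θ²)/2) · Γ((θ¹+θ²)/2) / Γ(θ¹). In particular, the beta-logistic density p(x;θ¹,θ²) = 2^{1−θ¹} sech(x)^{θ¹} e^{θ² x} / B((θ¹−θ²)/2, (θ¹+θ²)/2) integrates to 1 over ℝ. -/
/-!
Write `θ¹ = a + b`, `θ² = a - b`. The substitution `u = σ(2x)`, with `σ` the logistic sigmoid,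
maps `ℝ` onto `(0, 1)` with `du = 2 u (1 - u) dx`. Since `σ(2x) = eˣ sech x / 2` and
`1 - σ(2x) = e⁻ˣ sech x / 2`, the integrand `sech(x)^(a+b) e^((a-b)x)` equals `2^(a+b) uᵃ (1-u)ᵇ`,
so the integral is `2^(a+b-1) ∫₀¹ u^(a-1) (1-u)^(b-1) du = 2^(a+b-1) B(a, b)`.
-/

open MeasureTheory

/-- The hyperbolic secant function: `sech x = 2 / (eˣ + e⁻ˣ)`. -/
noncomputable def sech (x : ℝ) : ℝ := 1 / Real.cosh x

/-- The beta-logistic density `p(x; θ¹, θ²) = 2^{1-θ¹} sech(x)^{θ¹} e^{θ² x} / B((θ¹-θ²)/2, (θ¹+θ²)/2)`,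
where `B(a,b) = Γ(a)Γ(b)/Γ(a+b)`. -/
noncomputable def betaLogisticPDF (θ1 θ2 x : ℝ) : ℝ :=
  (2 : ℝ) ^ (1 - θ1) * sech x ^ θ1 * Real.exp (θ2 * x) /
    (Real.Gamma ((θ1 - θ2) / 2) * Real.Gamma ((θ1 + θ2) / 2) / Real.Gamma θ1)

open Set Real

lemma ofReal_rpow_mul_one_sub_rpow {u : ℝ} (hu : u ∈ Ioo (0 : ℝ) 1) (a b : ℝ) :
    ((u ^ (a - 1) * (1 - u) ^ (b - 1) : ℝ) : ℂ) =
      (u : ℂ) ^ ((a : ℂ) - 1) * (1 - (u : ℂ)) ^ ((b : ℂ) - 1) := by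
  push_cast [Complex.ofReal_cpow hu.1.le, Complex.ofReal_cpow (sub_nonneg.2 hu.2.le)]
  rfl

section BetaIntegral

variable {a b : ℝ}

lemma integrableOn_rpow_mul_one_sub_rpow (ha : 0 < a) (hb : 0 < b) :
    IntegrableOn (fun u : ℝ => u ^ (a - 1) * (1 - u) ^ (b - 1)) (Ioo 0 1) := by
  have hcomplex : IntegrableOn
      (fun u : ℝ => ((u : ℂ) ^ ((a : ℂ) - 1) * (1 - (u : ℂ)) ^ ((b : ℂ) - 1)).re) (Ioo 0 1) :=
    ((Complex.betaIntegral_convergent (by simpa) (by simpa)).1.mono_set Ioo_subset_Ioc_self).re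
  refine hcomplex.congr_fun (fun u hu => ?_) measurableSet_Ioo
  simp only [← ofReal_rpow_mul_one_sub_rpow hu, Complex.ofReal_re]

lemma integral_rpow_mul_one_sub_rpow (ha : 0 < a) (hb : 0 < b) :
    ∫ u in Ioo (0 : ℝ) 1, u ^ (a - 1) * (1 - u) ^ (b - 1) = Gamma a * Gamma b / Gamma (a + b) := by
  apply Complex.ofReal_injective
  rw [← integral_complex_ofReal, setIntegral_congr_fun measurableSet_Ioo
    (fun u hu => ofReal_rpow_mul_one_sub_rpow hu a b), ← integral_Ioc_eq_integral_Ioo,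
    ← intervalIntegral.integral_of_le zero_le_one, ← Complex.betaIntegral,
    Complex.betaIntegral_eq_Gamma_mul_div _ _ (by simpa) (by simpa)]
  push_cast [← Complex.Gamma_ofReal]
  rfl

end BetaIntegral

section SigmoidSubstitution

variable {E : Type*} [NormedAddCommGroup E] [NormedSpace ℝ E]

lemma abs_sigmoid_mul_one_sub_sigmoid (x : ℝ) :
    |sigmoid x * (1 - sigmoid x)| = sigmoid x * (1 - sigmoid x) :=
  abs_of_pos (mul_pos (sigmoid_pos x) (sub_pos.2 (sigmoid_lt_one x)))

lemma integrable_comp_sigmoid_iff (g : ℝ → E) :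
    Integrable (fun x => (sigmoid x * (1 - sigmoid x)) • g (sigmoid x)) ↔
      IntegrableOn g (Ioo 0 1) := by
  have := integrableOn_image_iff_integrableOn_abs_deriv_smul MeasurableSet.univ
    (fun x _ => (hasDerivAt_sigmoid x).hasDerivWithinAt) sigmoid_injective.injOn g
  rw [image_univ, range_sigmoid, integrableOn_univ] at this
  simpa only [abs_sigmoid_mul_one_sub_sigmoid] using this.symm

lemma integral_comp_sigmoid (g : ℝ → E) :
    ∫ x, (sigmoid x * (1 - sigmoid x)) • g (sigmoid x) = ∫ u in Ioo 0 1, g u := by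
  have := integral_image_eq_integral_abs_deriv_smul MeasurableSet.univ
    (fun x _ => (hasDerivAt_sigmoid x).hasDerivWithinAt) sigmoid_injective.injOn g
  rw [image_univ, range_sigmoid, setIntegral_univ] at this
  simpa only [abs_sigmoid_mul_one_sub_sigmoid] using this.symm

end SigmoidSubstitution

lemma sigmoid_two_mul (x : ℝ) : sigmoid (2 * x) = exp x * sech x / 2 := by
  have : exp (-(2 * x)) = exp (-x) / exp x := by rw [← exp_sub]; ring_nf
  rw [sigmoid_def, sech, cosh_eq, this]
  field_simp

lemma one_sub_sigmoid_two_mul (x : ℝ) : 1 - sigmoid (2 * x) = exp (-x) * sech x / 2 := by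
  rw [← sigmoid_neg, ← mul_neg, sigmoid_two_mul, sech, sech, cosh_neg]

lemma sech_rpow_add_mul_exp (a b x : ℝ) :
    sech x ^ (a + b) * exp ((a - b) * x) =
      2 ^ (a + b) * (sigmoid (2 * x) ^ a * (1 - sigmoid (2 * x)) ^ b) := by
  have hsech : 0 < sech x / 2 := by have := cosh_pos x; unfold sech; positivity
  rw [one_sub_sigmoid_two_mul, sigmoid_two_mul, mul_div_assoc, mul_div_assoc,
    mul_rpow (exp_pos _).le hsech.le, mul_rpow (exp_pos _).le hsech.le, ← exp_mul, ← exp_mul]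
  calc sech x ^ (a + b) * exp ((a - b) * x)
      = (2 * (sech x / 2)) ^ (a + b) * exp (x * a + -x * b) := by ring_nf
    _ = _ := by rw [mul_rpow zero_le_two hsech.le, rpow_add hsech, exp_add]; ring

lemma sigmoid_rpow_mul_one_sub_sigmoid_rpow (a b x : ℝ) :
    sigmoid x ^ a * (1 - sigmoid x) ^ b =
      (sigmoid x * (1 - sigmoid x)) • (sigmoid x ^ (a - 1) * (1 - sigmoid x) ^ (b - 1)) := by
  have h0 : sigmoid x ≠ 0 := (sigmoid_pos x).ne'
  have h1 : 1 - sigmoid x ≠ 0 := (sub_pos.2 (sigmoid_lt_one x)).ne'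
  rw [smul_eq_mul, rpow_sub_one h0, rpow_sub_one h1]
  field_simp

lemma betaLogisticPDF_add_sub (a b x : ℝ) :
    betaLogisticPDF (a + b) (a - b) x =
      2 ^ (1 - (a + b)) / (Gamma a * Gamma b / Gamma (a + b)) *
        (sech x ^ (a + b) * exp ((a - b) * x)) := by
  rw [betaLogisticPDF, show (a + b - (a - b)) / 2 = b by ring,
    show (a + b + (a - b)) / 2 = a by ring, mul_comm (Gamma b)]
  ring

section SechIntegral

variable {a b : ℝ}

lemma integrable_sigmoid_rpow_mul_one_sub_sigmoid_rpow (ha : 0 < a) (hb : 0 < b) :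
    Integrable (fun x => sigmoid x ^ a * (1 - sigmoid x) ^ b) := by
  simpa only [sigmoid_rpow_mul_one_sub_sigmoid_rpow a b] using
    (integrable_comp_sigmoid_iff _).2 (integrableOn_rpow_mul_one_sub_rpow ha hb)

lemma integral_sigmoid_rpow_mul_one_sub_sigmoid_rpow (ha : 0 < a) (hb : 0 < b) :
    ∫ x, sigmoid x ^ a * (1 - sigmoid x) ^ b = Gamma a * Gamma b / Gamma (a + b) := by
  simp_rw [sigmoid_rpow_mul_one_sub_sigmoid_rpow a b]
  exact (integral_comp_sigmoid (fun u => u ^ (a - 1) * (1 - u) ^ (b - 1))).trans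
    (integral_rpow_mul_one_sub_rpow ha hb)

lemma integrable_sech_rpow_add_mul_exp (ha : 0 < a) (hb : 0 < b) :
    Integrable (fun x => sech x ^ (a + b) * exp ((a - b) * x)) := by
  simpa only [sech_rpow_add_mul_exp] using
    ((integrable_sigmoid_rpow_mul_one_sub_sigmoid_rpow ha hb).comp_mul_left' two_ne_zero).const_mul
      (2 ^ (a + b))

lemma integral_sech_rpow_add_mul_exp (ha : 0 < a) (hb : 0 < b) :
    ∫ x, sech x ^ (a + b) * exp ((a - b) * x) =
      2 ^ (a + b - 1) * Gamma a * Gamma b / Gamma (a + b) := by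
  simp_rw [sech_rpow_add_mul_exp]
  rw [integral_const_mul,
    Measure.integral_comp_mul_left (fun x => sigmoid x ^ a * (1 - sigmoid x) ^ b),
    integral_sigmoid_rpow_mul_one_sub_sigmoid_rpow ha hb, rpow_sub_one two_ne_zero, smul_eq_mul,
    abs_of_pos (by norm_num : (0 : ℝ) < 2⁻¹)]
  ring

lemma integral_betaLogisticPDF_add_sub (ha : 0 < a) (hb : 0 < b) :
    ∫ x, betaLogisticPDF (a + b) (a - b) x = 1 := by
  have hpow : (2 : ℝ) ^ (1 - (a + b)) * 2 ^ (a + b - 1) = 1 := by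
    rw [← rpow_add two_pos]; norm_num
  have hΓ : Gamma a * Gamma b ≠ 0 := (mul_pos (Gamma_pos_of_pos ha) (Gamma_pos_of_pos hb)).ne'
  have hΓab : Gamma (a + b) ≠ 0 := (Gamma_pos_of_pos (add_pos ha hb)).ne'
  simp_rw [betaLogisticPDF_add_sub]
  rw [integral_const_mul, integral_sech_rpow_add_mul_exp ha hb]
  field_simp
  linear_combination hpow

end SechIntegral

/-- For `θ¹ + θ² > 0` and `θ¹ - θ² > 0`, the integral `∫ sech(x)^{θ¹} e^{θ² x} dx` converges and
equals `2^{θ¹-1} Γ((θ¹-θ²)/2) Γ((θ¹+θ²)/2) / Γ(θ¹)`; consequently the beta-logistic density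
integrates to 1. -/
theorem betaLogistic_normalization (θ1 θ2 : ℝ) (h1 : 0 < θ1 + θ2) (h2 : 0 < θ1 - θ2) :
    Integrable (fun x : ℝ => sech x ^ θ1 * Real.exp (θ2 * x)) ∧
    (∫ x : ℝ, sech x ^ θ1 * Real.exp (θ2 * x)) =
      (2 : ℝ) ^ (θ1 - 1) * Real.Gamma ((θ1 - θ2) / 2) * Real.Gamma ((θ1 + θ2) / 2) /
        Real.Gamma θ1 ∧
    (∫ x : ℝ, betaLogisticPDF θ1 θ2 x) = 1 := by
  obtain ⟨a, b, rfl, rfl⟩ : ∃ a b, θ1 = a + b ∧ θ2 = a - b :=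
    ⟨(θ1 + θ2) / 2, (θ1 - θ2) / 2, by ring, by ring⟩
  have ha : 0 < a := by linarith
  have hb : 0 < b := by linarith
  rw [show (a + b - (a - b)) / 2 = b by ring, show (a + b + (a - b)) / 2 = a by ring,
    integral_sech_rpow_add_mul_exp ha hb]
  exact ⟨integrable_sech_rpow_add_mul_exp ha hb, by ring, integral_betaLogisticPDF_add_sub ha hb⟩
end

section
/- For every real ρ > 0 and every real x, ∫_{ℝ} sech(t)^ρ · e^{i t x} dt = 2^{ρ−1} · B((ρ+ix)/2, (ρ−ix)/2), where B(z,w) = Γ(z)Γ(w)/Γ(z+w) is the complex Beta function. -/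
open MeasureTheory

/-!
Substituting `u = σ(2t)`, with `σ` the logistic sigmoid, turns the Beta integral
`∫₀¹ u^(a-1) (1-u)^(b-1) du` into `2 ∫ σ(2t)^a σ(-2t)^b dt`, because `σ' = σ (1 - σ)` and
`1 - σ(s) = σ(-s)`. For `a, b = (ρ ± ix)/2` the new integrand is `2^(-ρ) sech(t)^ρ e^{itx}`,
as `σ(2t) σ(-2t) = sech(t)² / 4` and `σ(2t) / σ(-2t) = e^{2t}`.
-/

open Complex Real Set

namespace Real

lemma log_sigmoid_neg (s : ℝ) : log (sigmoid (-s)) = -log (1 + exp s) := by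
  rw [sigmoid_def, neg_neg, log_inv]

lemma log_sigmoid (s : ℝ) : log (sigmoid s) = s - log (1 + exp s) := by
  have h := sigmoid_mul_rexp_neg (-s)
  rw [neg_neg] at h
  rw [← h, log_mul (sigmoid_pos _).ne' (exp_pos s).ne', log_exp, log_sigmoid_neg]
  ring

end Real

lemma sech_eq_two_mul_exp_div (t : ℝ) : sech t = 2 * Real.exp t / (1 + Real.exp (2 * t)) := by
  have hexp : Real.exp (2 * t) = Real.exp t * Real.exp t := by rw [← Real.exp_add, two_mul]
  rw [sech, Real.cosh_eq, Real.exp_neg, hexp]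
  field_simp
  ring

lemma log_sech (t : ℝ) : Real.log (sech t) = Real.log 2 + t - Real.log (1 + Real.exp (2 * t)) := by
  rw [sech_eq_two_mul_exp_div, Real.log_div (by positivity) (by positivity),
    Real.log_mul two_ne_zero (Real.exp_pos t).ne', Real.log_exp]

lemma sigmoid_cpow_mul_sigmoid_neg_cpow (a b : ℂ) (s : ℝ) :
    (sigmoid s : ℂ) ^ a * (sigmoid (-s) : ℂ) ^ b =
      exp (a * s - (a + b) * Real.log (1 + Real.exp s)) := by
  rw [cpow_def_of_ne_zero (by exact_mod_cast (sigmoid_pos s).ne'),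
    cpow_def_of_ne_zero (by exact_mod_cast (sigmoid_pos (-s)).ne'), ← Complex.exp_add,
    ← ofReal_log (sigmoid_pos s).le, ← ofReal_log (sigmoid_pos (-s)).le, log_sigmoid,
    log_sigmoid_neg]
  congr 1
  push_cast
  ring

theorem Complex.betaIntegral_eq_integral_sigmoid (a b : ℂ) :
    betaIntegral a b = ∫ s : ℝ, (sigmoid s : ℂ) ^ a * (sigmoid (-s) : ℂ) ^ b := by
  rw [betaIntegral, intervalIntegral.integral_of_le zero_le_one, integral_Ioc_eq_integral_Ioo,
    ← range_sigmoid, ← image_univ,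
    integral_image_eq_integral_abs_deriv_smul MeasurableSet.univ
      (fun s _ => (hasDerivAt_sigmoid s).hasDerivWithinAt) sigmoid_injective.injOn,
    setIntegral_univ]
  congr 1 with s
  have h0 : (sigmoid s : ℂ) ≠ 0 := by exact_mod_cast (sigmoid_pos s).ne'
  have h1 : (sigmoid (-s) : ℂ) ≠ 0 := by exact_mod_cast (sigmoid_pos (-s)).ne'
  have h1s : (1 : ℂ) - sigmoid s = sigmoid (-s) := by rw [sigmoid_neg]; push_cast; ring
  rw [← sigmoid_neg, abs_of_pos (mul_pos (sigmoid_pos s) (sigmoid_pos (-s))), real_smul, h1s,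
    cpow_sub _ _ h0, cpow_sub _ _ h1, cpow_one, cpow_one]
  push_cast
  field_simp

lemma sech_rpow_mul_exp_eq (ρ x t : ℝ) :
    ((sech t ^ ρ : ℝ) : ℂ) * exp (I * t * x) =
      2 ^ (ρ : ℂ) * ((sigmoid (2 * t) : ℂ) ^ ((ρ + I * x) / 2) *
        (sigmoid (-(2 * t)) : ℂ) ^ ((ρ - I * x) / 2)) := by
  have hsech : 0 < sech t := by rw [sech_eq_two_mul_exp_div]; positivity
  rw [sigmoid_cpow_mul_sigmoid_neg_cpow, rpow_def_of_pos hsech, log_sech, ofReal_exp,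
    cpow_def_of_ne_zero two_ne_zero, ← ofNat_log, ← Complex.exp_add, ← Complex.exp_add]
  congr 1
  push_cast
  ring

/-- Bateman's Fourier transform formula: for `ρ > 0` and real `x`,
`∫ sech(t)^ρ e^{itx} dt = 2^{ρ-1} B((ρ+ix)/2, (ρ-ix)/2)`,
where `B(z,w) = Γ(z)Γ(w)/Γ(z+w)` is the complex Beta function. -/
theorem sech_rpow_fourier (ρ x : ℝ) (hρ : 0 < ρ) :
    (∫ t : ℝ, ((sech t ^ ρ : ℝ) : ℂ) * Complex.exp (Complex.I * t * x)) =
      (2 : ℂ) ^ ((ρ : ℂ) - 1) *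
        (Complex.Gamma ((ρ + Complex.I * x) / 2) * Complex.Gamma ((ρ - Complex.I * x) / 2) /
          Complex.Gamma (((ρ : ℂ) + Complex.I * x) / 2 + ((ρ : ℂ) - Complex.I * x) / 2)) := by
  set a : ℂ := (ρ + I * x) / 2
  set b : ℂ := (ρ - I * x) / 2
  have ha : 0 < a.re := by simp [a, hρ]
  have hb : 0 < b.re := by simp [b, hρ]
  have hab : a + b = ρ := by ring
  rw [Gamma_mul_Gamma_eq_betaIntegral ha hb, hab,
    mul_div_cancel_left₀ _ (Gamma_ne_zero_of_re_pos (by simpa using hρ)),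
    betaIntegral_eq_integral_sigmoid]
  simp_rw [sech_rpow_mul_exp_eq, integral_const_mul]
  rw [Measure.integral_comp_mul_left (fun s => (sigmoid s : ℂ) ^ a * (sigmoid (-s) : ℂ) ^ b),
    cpow_sub _ _ two_ne_zero, cpow_one, abs_inv, abs_two, real_smul]
  push_cast
  ring
end

section
/- Let u, v > 0, set θ¹ = u + v, and let a = ψ'(u), b = ψ'(v), c = ψ'(θ¹), A = ψ''(u), B = ψ''(v), C = ψ''(θ¹). Define the 2×2 symmetric matrix G by g₁₁ = (a+b)/4 − c, g₁₂ = g₂₁ = (a−b)/4, g₂₂ = (a+b)/4, and the symmetric tensor T by T₁₁₁ = (A+B)/8 − C, T₁₁₂ = T₁₂₁ = T₂₁₁ = T₂₂₂ = (A−B)/8, T₁₂₂ = T₂₁₂ = T₂₂₁ = (A+B)/8. Set 𝒢 = ab − c(a+b) and assume 𝒢 ≠ 0, and let (g^{mn}) be the inverse matrix of G. Then for every real α, the α-curvature tensor component R^{(α)}₁₂₁₂ := ((1−α²)/4) · Σ_{m,n=1}^{2} g^{mn}(T_{1m1}T_{22n} − T_{1m2}T_{12n}) equals ((1−α²)/(16𝒢))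 · ( c·A·B − C·(a·B + b·A) ). -/
/-- The trigamma function `ψ'(z) = d²/dz² log Γ(z)`. -/
noncomputable def trigamma (z : ℝ) : ℝ := iteratedDeriv 2 (fun x => Real.log (Real.Gamma x)) z

/-- The tetragamma function `ψ''(z) = d³/dz³ log Γ(z)`. -/
noncomputable def tetragamma (z : ℝ) : ℝ := iteratedDeriv 3 (fun x => Real.log (Real.Gamma x)) z

/-- The α-curvature tensor component `R^{(α)}₁₂₁₂` of the beta-logistic statistical manifold:
with `u = (θ¹+θ²)/2`, `v = (θ¹−θ²)/2`, `a = ψ'(u)`, `b = ψ'(v)`, `c = ψ'(u+v)`,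
`A = ψ''(u)`, `B = ψ''(v)`, `C = ψ''(u+v)`, `𝒢 = ab − c(a+b)` and `G`, `T` the Fisher matrix
and cubic tensor, one has
`((1−α²)/4) Σ_{m,n} g^{mn} (T_{1m1}T_{22n} − T_{1m2}T_{12n})
  = ((1−α²)/(16𝒢)) (cAB − C(aB + bA))`. -/
theorem alpha_curvature_R1212 (u v α : ℝ) (hu : 0 < u) (hv : 0 < v)
    (a b c A B C : ℝ)
    (ha : a = trigamma u) (hb : b = trigamma v) (hc : c = trigamma (u + v))
    (hA : A = tetragamma u) (hB : B = tetragamma v) (hC : C = tetragamma (u + v))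
    (G : Matrix (Fin 2) (Fin 2) ℝ)
    (hG : G = !![(a + b) / 4 - c, (a - b) / 4; (a - b) / 4, (a + b) / 4])
    (T : Fin 2 → Fin 2 → Fin 2 → ℝ)
    (hT : T = fun i j k =>
      if i.val + j.val + k.val = 0 then (A + B) / 8 - C
      else if i.val + j.val + k.val = 2 then (A + B) / 8
      else (A - B) / 8)
    (h𝒢 : a * b - c * (a + b) ≠ 0) :
    ((1 - α ^ 2) / 4) *
        (∑ m : Fin 2, ∑ n : Fin 2, G⁻¹ m n * (T 0 m 0 * T 1 1 n - T 0 m 1 * T 0 1 n)) =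
      ((1 - α ^ 2) / (16 * (a * b - c * (a + b)))) * (c * A * B - C * (a * B + b * A)) := by
  have hdet : G.det = (a * b - c * (a + b)) / 4 := by
    subst hG; simp [Matrix.det_fin_two]; ring
  have hGinv : G⁻¹ = (4 / (a * b - c * (a + b))) •
      !![(a + b) / 4, -((a - b) / 4); -((a - b) / 4), (a + b) / 4 - c] := by
    rw [Matrix.inv_def, hdet, Matrix.adjugate_fin_two]
    subst hG
    simp [Matrix.smul_of]
  subst hT
  rw [hGinv]
  simp [Fin.sum_univ_two, Matrix.smul_apply]
  field_simp
  ring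
end

section
/- For the Bernoulli case θ¹ = 2, θ² = 0 of the beta-logistic family (so u = v = 1), the α-scalar curvature R^{(α)} = (1−α²)·[ψ'(θ¹)ψ''(u)ψ''(v) − ψ''(θ¹)(ψ'(u)ψ''(v) + ψ'(v)ψ''(u))]/(2𝒢²), where 𝒢 = ψ'(u)ψ'(v) − ψ'(θ¹)(ψ'(u)+ψ'(v)), equals −432·(1−α²)·ζ(3)·(6ζ(3) + π²ζ(3) − 2π²) / ( π⁴·(π² − 12)² ) for every real α. -/
/-!
By the Bohr–Mollerup theorem, for `x > 0`
`log Γ(x) = ∑ₙ [(x - 1)/(n + 1) - log ((x + n)/(n + 1))] - (x - 1) c`,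
where `c` is the value of the series at `x = 2` (Euler's constant, never needed explicitly):
the right side is convex, every term vanishes at `x = 1`, and `f (x + 1) = f x + log x` because
the difference of the series telescopes. Differentiating termwise gives
`ψ'(x) = ∑ₙ (x + n)⁻²` and `ψ''(x) = -2 ∑ₙ (x + n)⁻³`, hence `ψ'(1) = ζ(2) = π²/6`,
`ψ''(1) = -2ζ(3)`, and dropping the term `n = 0` gives `ψ'(2) = ψ'(1) - 1`, `ψ''(2) = ψ''(1) + 2`.
The curvature is then a rational function of `π` and `ζ(3)`.
-/

open Real Filter Topology Set

noncomputable section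

def logGammaTerm (n : ℕ) (x : ℝ) : ℝ := (x - 1) / (n + 1) - (log (x + n) - log (n + 1))

def digammaTerm (n : ℕ) (x : ℝ) : ℝ := ((n : ℝ) + 1)⁻¹ - (x + n)⁻¹

def realHurwitzZeta (k : ℕ) (x : ℝ) : ℝ := ∑' n : ℕ, ((x + n) ^ k)⁻¹

def logGammaSeries (x : ℝ) : ℝ :=
  ∑' n, logGammaTerm n x - (x - 1) * ∑' n, logGammaTerm n 2

end

lemma summable_inv_add_pow {a : ℝ} (ha : 0 < a) {k : ℕ} (hk : 2 ≤ k) :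
    Summable fun n : ℕ => ((a + n) ^ k)⁻¹ := by
  refine ((Real.summable_one_div_nat_add_rpow a k).mpr (by exact_mod_cast hk)).congr fun n => ?_
  rw [abs_of_pos (by positivity), Real.rpow_natCast, one_div, add_comm]

lemma hasDerivAt_inv_add_pow (k n : ℕ) {x : ℝ} (hx : 0 < x) :
    HasDerivAt (fun y : ℝ => ((y + n) ^ k)⁻¹) (-k * ((x + n) ^ (k + 1))⁻¹) x := by
  have hxn : x + n ≠ 0 := by positivity
  refine (((hasDerivAt_id' x).add_const (n : ℝ)).pow k).inv (pow_ne_zero k hxn) |>.congr_deriv ?_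
  field_simp
  rcases k with _ | k
  · simp
  · simp [pow_succ]
    ring

lemma hasDerivAt_logGammaTerm (n : ℕ) {x : ℝ} (hx : 0 < x) :
    HasDerivAt (logGammaTerm n) (digammaTerm n x) x := by
  have hlog := (((hasDerivAt_id' x).add_const (n : ℝ)).log (by positivity)).sub_const (log (n + 1))
  refine (((hasDerivAt_id' x).sub_const 1).div_const ((n : ℝ) + 1)).sub hlog |>.congr_deriv ?_
  simp [digammaTerm]

lemma hasDerivAt_digammaTerm (n : ℕ) {x : ℝ} (hx : 0 < x) :
    HasDerivAt (digammaTerm n) ((x + n) ^ 2)⁻¹ x := by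
  refine (((hasDerivAt_id' x).add_const (n : ℝ)).inv (by positivity)).const_sub ((n : ℝ) + 1)⁻¹
    |>.congr_deriv ?_
  ring

lemma abs_digammaTerm_le {a b y : ℝ} (ha : 0 < a) (ha1 : a ≤ 1) (hb : 1 ≤ b) (hy : y ∈ Ioo a b)
    (n : ℕ) : |digammaTerm n y| ≤ b * ((a + n) ^ 2)⁻¹ := by
  obtain ⟨hay, hyb⟩ := hy
  have hden : (a + n) ^ 2 ≤ (n + 1) * (y + n) := by nlinarith
  rw [digammaTerm, inv_sub_inv (by positivity) (by linarith), abs_div,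
    abs_of_pos (a := (n + 1) * (y + n)) (by nlinarith), ← div_eq_mul_inv]
  exact div_le_div₀ (by linarith) (abs_le.mpr ⟨by linarith, by linarith⟩) (by positivity) hden

lemma logGammaTerm_one (n : ℕ) : logGammaTerm n 1 = 0 := by
  simp [logGammaTerm, add_comm]

lemma digammaTerm_one (n : ℕ) : digammaTerm n 1 = 0 := by
  simp [digammaTerm, add_comm]

lemma summable_logGammaTerm {x : ℝ} (hx : 0 < x) : Summable fun n => logGammaTerm n x := by
  obtain ⟨a, ha, hax1⟩ := exists_between (lt_min hx one_pos)
  obtain ⟨hax, ha1⟩ := lt_min_iff.mp hax1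
  refine summable_of_summable_hasDerivAt_of_isPreconnected (t := Ioo (a) (x + 2))
    (y₀ := 1) ((summable_inv_add_pow ha le_rfl).mul_left (x + 2)) isOpen_Ioo isPreconnected_Ioo
    (fun n y hy => hasDerivAt_logGammaTerm n (ha.trans hy.1))
    (fun n y hy => abs_digammaTerm_le ha ha1.le (by linarith) hy n)
    ⟨ha1, by linarith⟩ (by simp [logGammaTerm_one]) ⟨hax, by linarith⟩

lemma hasDerivAt_tsum_logGammaTerm {x : ℝ} (hx : 0 < x) :
    HasDerivAt (fun y => ∑' n, logGammaTerm n y) (∑' n, digammaTerm n x) x := by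
  obtain ⟨a, ha, hax1⟩ := exists_between (lt_min hx one_pos)
  obtain ⟨hax, ha1⟩ := lt_min_iff.mp hax1
  refine hasDerivAt_tsum_of_isPreconnected (t := Ioo (a) (x + 2))
    (y₀ := 1) ((summable_inv_add_pow ha le_rfl).mul_left (x + 2)) isOpen_Ioo isPreconnected_Ioo
    (fun n y hy => hasDerivAt_logGammaTerm n (ha.trans hy.1))
    (fun n y hy => abs_digammaTerm_le ha ha1.le (by linarith) hy n)
    ⟨ha1, by linarith⟩ (by simp [logGammaTerm_one]) ⟨hax, by linarith⟩

lemma hasDerivAt_tsum_digammaTerm {x : ℝ} (hx : 0 < x) :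
    HasDerivAt (fun y => ∑' n, digammaTerm n y) (realHurwitzZeta 2 x) x := by
  obtain ⟨a, ha, hax1⟩ := exists_between (lt_min hx one_pos)
  obtain ⟨hax, ha1⟩ := lt_min_iff.mp hax1
  refine hasDerivAt_tsum_of_isPreconnected (t := Ioi (a)) (y₀ := 1)
    (summable_inv_add_pow ha le_rfl) isOpen_Ioi isPreconnected_Ioi
    (fun n y hy => hasDerivAt_digammaTerm n (ha.trans hy)) (fun n y hy => ?_)
    ha1 (by simp [digammaTerm_one]) hax
  have hy : a < y := hy
  rw [norm_inv, norm_pow, Real.norm_of_nonneg (by linarith)]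
  gcongr

lemma hasDerivAt_realHurwitzZeta {k : ℕ} (hk : 2 ≤ k) {x : ℝ} (hx : 0 < x) :
    HasDerivAt (realHurwitzZeta k) (-k * realHurwitzZeta (k + 1) x) x := by
  have hx2 : 0 < x / 2 := by positivity
  rw [realHurwitzZeta, ← tsum_mul_left]
  refine hasDerivAt_tsum_of_isPreconnected (t := Ioi (x / 2)) (y₀ := x)
    ((summable_inv_add_pow hx2 (by omega : 2 ≤ k + 1)).mul_left (k : ℝ)) isOpen_Ioi
    isPreconnected_Ioi
    (fun n y hy => hasDerivAt_inv_add_pow k n (hx2.trans hy)) (fun n y hy => ?_)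
    (by simp; linarith) (summable_inv_add_pow hx hk) (by simp; linarith)
  have hy : x / 2 < y := hy
  rw [norm_mul, norm_neg, Real.norm_natCast, norm_inv, norm_pow, Real.norm_of_nonneg (by linarith)]
  gcongr

lemma realHurwitzZeta_add_one {k : ℕ} (hk : 2 ≤ k) {x : ℝ} (hx : 0 < x) :
    realHurwitzZeta k (x + 1) = realHurwitzZeta k x - (x ^ k)⁻¹ := by
  rw [realHurwitzZeta, realHurwitzZeta, (summable_inv_add_pow hx hk).tsum_eq_zero_add]
  simp only [Nat.cast_zero, add_zero, add_sub_cancel_left, Nat.cast_succ]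
  congr! 3 with n
  ring

lemma realHurwitzZeta_one (k : ℕ) : realHurwitzZeta k 1 = ∑' n : ℕ, 1 / ((n : ℝ) + 1) ^ k := by
  simp only [realHurwitzZeta, one_div, add_comm (1 : ℝ)]

lemma tsum_sub_succ_of_tendsto {a : ℕ → ℝ} {l : ℝ} (hs : Summable fun n => a n - a (n + 1))
    (ha : Tendsto a atTop (𝓝 l)) : ∑' n, (a n - a (n + 1)) = a 0 - l :=
  tendsto_nhds_unique hs.hasSum.tendsto_sum_nat <| by
    simpa only [Finset.sum_range_sub'] using tendsto_const_nhds.sub ha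

lemma logGammaSeries_add_one {x : ℝ} (hx : 0 < x) :
    logGammaSeries (x + 1) = logGammaSeries x + log x := by
  have h₁ := summable_logGammaTerm (by linarith : 0 < x + 1)
  have h₀ := summable_logGammaTerm hx
  have h₂ := summable_logGammaTerm two_pos
  have hterm : ∀ n : ℕ, logGammaTerm n (x + 1) - logGammaTerm n x - logGammaTerm n 2 =
      (log (x + n) - log (n + 1)) - (log (x + (n + 1 : ℕ)) - log ((n + 1 : ℕ) + 1)) := by
    intro n
    simp only [logGammaTerm]
    push_cast
    ring_nf
  have hlim : Tendsto (fun n : ℕ => log (x + n) - log (n + 1)) atTop (𝓝 0) := by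
    refine ((tendsto_log_comp_add_sub_log (x - 1)).comp
      (tendsto_atTop_add_const_right _ 1 tendsto_natCast_atTop_atTop)).congr fun n => ?_
    simp only [Function.comp_apply]
    ring_nf
  have htel : ∑' n, (logGammaTerm n (x + 1) - logGammaTerm n x - logGammaTerm n 2) = log x := by
    have hsum := (h₁.sub h₀).sub h₂
    simp_rw [hterm] at hsum ⊢
    rw [tsum_sub_succ_of_tendsto hsum hlim]
    simp
  rw [(h₁.sub h₀).tsum_sub h₂, h₁.tsum_sub h₀] at htel
  simp only [logGammaSeries]
  linarith

lemma logGammaSeries_one : logGammaSeries 1 = 0 := by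
  simp [logGammaSeries, logGammaTerm_one]

lemma hasDerivAt_logGammaSeries {x : ℝ} (hx : 0 < x) :
    HasDerivAt logGammaSeries (∑' n, digammaTerm n x - ∑' n, logGammaTerm n 2) x := by
  have := (hasDerivAt_tsum_logGammaTerm hx).sub
    (((hasDerivAt_id' x).sub_const 1).mul_const (∑' n, logGammaTerm n 2))
  rwa [one_mul] at this

lemma realHurwitzZeta_two_nonneg (x : ℝ) : 0 ≤ realHurwitzZeta 2 x :=
  tsum_nonneg fun n => by positivity

lemma convexOn_logGammaSeries : ConvexOn ℝ (Ioi 0) logGammaSeries := by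
  refine convexOn_of_hasDerivWithinAt2_nonneg (convex_Ioi 0)
    (f' := fun x => ∑' n, digammaTerm n x - ∑' n, logGammaTerm n 2)
    (fun x hx => (hasDerivAt_logGammaSeries hx).continuousAt.continuousWithinAt) ?_ ?_
    (fun x _ => realHurwitzZeta_two_nonneg x)
  · simp only [interior_Ioi]
    exact fun x hx => (hasDerivAt_logGammaSeries hx).hasDerivWithinAt
  · simp only [interior_Ioi]
    exact fun x hx => ((hasDerivAt_tsum_digammaTerm hx).sub_const _).hasDerivWithinAt

lemma logGammaSeries_eq_log_Gamma {x : ℝ} (hx : 0 < x) : logGammaSeries x = log (Gamma x) := by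
  have hΓ : EqOn (fun y => exp (logGammaSeries y)) Gamma (Ioi 0) := by
    refine Real.eq_Gamma_of_log_convex ?_ (fun {y} hy => ?_) (fun _ => exp_pos _) ?_
    · simpa [Function.comp_def] using convexOn_logGammaSeries
    · rw [logGammaSeries_add_one hy, exp_add, exp_log hy, mul_comm]
    · simp [logGammaSeries_one]
  rw [← hΓ hx, log_exp]

lemma Set.EqOn.deriv_of_hasDerivAt {f g g' : ℝ → ℝ} {s : Set ℝ} (hfg : EqOn f g s)
    (hs : IsOpen s) (hg : ∀ x ∈ s, HasDerivAt g (g' x) x) : EqOn (_root_.deriv f) g' s :=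
  fun x hx => (hfg.deriv hs hx).trans (hg x hx).deriv

lemma eqOn_deriv_deriv_log_Gamma :
    EqOn (deriv (deriv fun x => log (Gamma x))) (realHurwitzZeta 2) (Ioi 0) :=
  have h₀ : EqOn (fun x => log (Gamma x)) logGammaSeries (Ioi 0) :=
    fun _ hx => (logGammaSeries_eq_log_Gamma hx).symm
  (h₀.deriv_of_hasDerivAt isOpen_Ioi fun _ hx => hasDerivAt_logGammaSeries hx).deriv_of_hasDerivAt
    isOpen_Ioi fun _ hx => (hasDerivAt_tsum_digammaTerm hx).sub_const _

lemma trigamma_eq_realHurwitzZeta {x : ℝ} (hx : 0 < x) : trigamma x = realHurwitzZeta 2 x := by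
  rw [trigamma, iteratedDeriv_succ, iteratedDeriv_one]
  exact eqOn_deriv_deriv_log_Gamma hx

lemma tetragamma_eq_realHurwitzZeta {x : ℝ} (hx : 0 < x) :
    tetragamma x = -2 * realHurwitzZeta 3 x := by
  rw [tetragamma, iteratedDeriv_succ, iteratedDeriv_succ, iteratedDeriv_one]
  have := eqOn_deriv_deriv_log_Gamma.deriv_of_hasDerivAt isOpen_Ioi
    fun _ hy => hasDerivAt_realHurwitzZeta le_rfl hy
  exact_mod_cast this hx

lemma trigamma_add_one {x : ℝ} (hx : 0 < x) : trigamma (x + 1) = trigamma x - (x ^ 2)⁻¹ := by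
  rw [trigamma_eq_realHurwitzZeta (by linarith), trigamma_eq_realHurwitzZeta hx,
    realHurwitzZeta_add_one le_rfl hx]

lemma tetragamma_add_one {x : ℝ} (hx : 0 < x) :
    tetragamma (x + 1) = tetragamma x + 2 * (x ^ 3)⁻¹ := by
  rw [tetragamma_eq_realHurwitzZeta (by linarith), tetragamma_eq_realHurwitzZeta hx,
    realHurwitzZeta_add_one (by norm_num) hx]
  ring

lemma trigamma_one : trigamma 1 = π ^ 2 / 6 := by
  have h := hasSum_zeta_two.summable.tsum_eq_zero_add
  rw [hasSum_zeta_two.tsum_eq] at h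
  rw [trigamma_eq_realHurwitzZeta one_pos, realHurwitzZeta_one]
  simpa using h.symm

lemma tetragamma_one : tetragamma 1 = -2 * ∑' n : ℕ, 1 / ((n : ℝ) + 1) ^ 3 := by
  rw [tetragamma_eq_realHurwitzZeta one_pos, realHurwitzZeta_one]

/-- In the Bernoulli case `θ¹ = 2`, `θ² = 0` (so `u = v = 1`) of the beta-logistic family,
the α-scalar curvature
`R^{(α)} = (1−α²)(ψ'(2)ψ''(1)ψ''(1) − ψ''(2)(ψ'(1)ψ''(1) + ψ'(1)ψ''(1)))/(2𝒢²)`,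
with `𝒢 = ψ'(1)ψ'(1) − ψ'(2)(ψ'(1)+ψ'(1))`, equals
`−432(1−α²)ζ(3)(6ζ(3) + π²ζ(3) − 2π²)/(π⁴(π²−12)²)`. -/
theorem bernoulli_case_scalar_curvature (α z : ℝ)
    (hz : z = ∑' n : ℕ, 1 / ((n : ℝ) + 1) ^ 3)
    (𝒢 : ℝ) (hgg : 𝒢 = trigamma 1 * trigamma 1 - trigamma 2 * (trigamma 1 + trigamma 1)) :
    (1 - α ^ 2) *
        (trigamma 2 * tetragamma 1 * tetragamma 1 -
          tetragamma 2 * (trigamma 1 * tetragamma 1 + trigamma 1 * tetragamma 1)) /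
        (2 * 𝒢 ^ 2) =
      -432 * (1 - α ^ 2) * z * (6 * z + Real.pi ^ 2 * z - 2 * Real.pi ^ 2) /
        (Real.pi ^ 4 * (Real.pi ^ 2 - 12) ^ 2) := by
  have hψ'₂ : trigamma 2 = π ^ 2 / 6 - 1 := by
    simpa [trigamma_one, one_add_one_eq_two] using trigamma_add_one one_pos
  have hψ''₁ : tetragamma 1 = -2 * z := hz ▸ tetragamma_one
  have hψ''₂ : tetragamma 2 = 2 - 2 * z := by
    rw [← one_add_one_eq_two, tetragamma_add_one one_pos, hψ''₁]
    ring
  have h𝒢 : 𝒢 = -(π ^ 2 * (π ^ 2 - 12)) / 36 := by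
    rw [hgg, hψ'₂, trigamma_one]
    ring
  have hπ : π ^ 2 - 12 ≠ 0 := by nlinarith [pi_lt_d2, pi_pos]
  rw [h𝒢, hψ'₂, hψ''₁, hψ''₂, trigamma_one]
  field_simp
  ring
end
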